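/- Let β > 1 and w ∈ Σ_β^n. Then w is not full if and only if w ends with a nonempty prefix of ε(1,β); moreover, if ε(1,β) is finite with length M, the length s of that prefix can be taken with 1 ≤ s ≤ min{M−1, n}, and if ε(1,β) is infinite, with 1 ≤ s ≤ n. -/

import Mathlib

noncomputable def Tb (β x : ℝ) : ℝ := β * x - ⌊β * x⌋

/-- The (i+1)-th digit of the β-expansion of x (0-indexed). -/
noncomputable def dig (β x : ℝ) (i : ℕ) : ℕ := (⌊β * (Tb β)^[i] x⌋).toNat

/-- w is an admissible word for base β. -/
def Adm (β : ℝ) (w : List ℕ) : Prop :=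
  ∃ x, x ∈ Set.Ico (0:ℝ) 1 ∧ ∀ i (h : i < w.length), w[i] = dig β x i

/-- u is an admissible digit sequence for base β. -/
def AdmSeq (β : ℝ) (u : ℕ → ℕ) : Prop :=
  ∃ x, x ∈ Set.Ico (0:ℝ) 1 ∧ ∀ i, u i = dig β x i

/-- The cylinder I(w) ⊆ [0,1). -/
def cyl (β : ℝ) (w : List ℕ) : Set ℝ :=
  {x | x ∈ Set.Ico (0:ℝ) 1 ∧ ∀ i (h : i < w.length), w[i] = dig β x i}

/-- w is a full word: T_β^{|w|} maps I(w) onto [0,1). -/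
def Full (β : ℝ) (w : List ℕ) : Prop :=
  (Tb β)^[w.length] '' cyl β w = Set.Ico 0 1

/-- The β-expansion of 1 is finite with length M. -/
def FiniteLen (β : ℝ) (M : ℕ) : Prop :=
  0 < M ∧ dig β 1 (M-1) ≠ 0 ∧ ∀ j, M ≤ j → dig β 1 j = 0

open Classical in
/-- The (i+1)-th digit of the modified β-expansion ε*(1,β) (0-indexed). -/
noncomputable def modExp (β : ℝ) (i : ℕ) : ℕ :=
  if h : ∃ M, FiniteLen β M then
    (if (i+1) % (Nat.find h) = 0 then dig β 1 (Nat.find h - 1) - 1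
     else dig β 1 (i % Nat.find h))
  else dig β 1 i

/-- View a finite word as the sequence w0^∞. -/
def wordSeq (w : List ℕ) (i : ℕ) : ℕ := w.getD i 0

/-- Strict lexicographic order on sequences. -/
def seqLt (u v : ℕ → ℕ) : Prop := ∃ k, (∀ i, i < k → u i = v i) ∧ u k < v k

/-- Strict lexicographic order on finite words (identified with w0^∞). -/
def wlt (u v : List ℕ) : Prop := seqLt (wordSeq u) (wordSeq v)

/-- Concatenation of a finite word with a sequence. -/
def catSeq (w : List ℕ) (u : ℕ → ℕ) (i : ℕ) : ℕ :=
  if h : i < w.length then w[i] else u (i - w.length)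

open Classical in
/-- The largest position k ≤ s with ε_k ≠ 0 (greedy step). -/
noncomputable def greedyStep (β : ℝ) (s : ℕ) : ℕ :=
  Nat.findGreatest (fun k => 1 ≤ k ∧ dig β 1 (k-1) ≠ 0) s

/-- τ_β(s): number of terms in the greedy representation of s by nonzero positions. -/
noncomputable def tau (β : ℝ) : ℕ → ℕ
  | 0 => 0
  | s + 1 => tau β (s - (greedyStep β (s+1) - 1)) + 1
decreasing_by omega

open Classical in
/-- r_s(β): maximal length of a string of 0's in ε₁*⋯ε_s*. -/
noncomputable def rrun (β : ℝ) (s : ℕ) : ℕ :=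
  Nat.findGreatest (fun k => 1 ≤ k ∧ ∃ i, i + k ≤ s ∧ ∀ t, t < k → modExp β (i + t) = 0) s

/-- v is the immediate successor of u in the lexicographic order on Σ_β^n. -/
def SuccIn (β : ℝ) (n : ℕ) (u v : List ℕ) : Prop :=
  u.length = n ∧ v.length = n ∧ Adm β u ∧ Adm β v ∧ wlt u v ∧
  ¬ ∃ z : List ℕ, z.length = n ∧ Adm β z ∧ wlt u z ∧ wlt z v

/-- There is a run of l consecutive non-full words in Σ_β^n. -/
def NonFullRun (β : ℝ) (n l : ℕ) : Prop :=
  ∃ f : ℕ → List ℕ,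
    (∀ j, j < l → (f j).length = n ∧ Adm β (f j) ∧ ¬ Full β (f j)) ∧
    (∀ j, j + 1 < l → SuccIn β n (f j) (f (j+1)))

/-- There is a maximal run of l consecutive non-full words in Σ_β^n. -/
def MaxNonFullRun (β : ℝ) (n l : ℕ) : Prop :=
  0 < l ∧ ∃ f : ℕ → List ℕ,
    (∀ j, j < l → (f j).length = n ∧ Adm β (f j) ∧ ¬ Full β (f j)) ∧
    (∀ j, j + 1 < l → SuccIn β n (f j) (f (j+1))) ∧
    (∀ u, SuccIn β n u (f 0) → Full β u) ∧
    (∀ u, SuccIn β n (f (l-1)) u → Full β u)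

/-- There is a maximal run of l consecutive full words in Σ_β^n. -/
def MaxFullRun (β : ℝ) (n l : ℕ) : Prop :=
  0 < l ∧ ∃ f : ℕ → List ℕ,
    (∀ j, j < l → (f j).length = n ∧ Adm β (f j) ∧ Full β (f j)) ∧
    (∀ j, j + 1 < l → SuccIn β n (f j) (f (j+1))) ∧
    (∀ u, SuccIn β n u (f 0) → ¬ Full β u) ∧
    (∀ u, SuccIn β n (f (l-1)) u → ¬ Full β u)

/-- The canonical decomposition of an admissible word, as in the structure theorem:
p.1 is the list of block lengths k₁,…,k_p and p.2 is the final length l. -/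
def Decomp (β : ℝ) (w : List ℕ) (p : List ℕ × ℕ) : Prop :=
  1 ≤ p.2 ∧ (∀ k ∈ p.1, 1 ≤ k) ∧ p.1.sum + p.2 = w.length ∧
  (∀ j, j < p.1.length →
    (∀ t, t < p.1.getD j 0 - 1 → w.getD ((p.1.take j).sum + t) 0 = dig β 1 t) ∧
    w.getD ((p.1.take j).sum + (p.1.getD j 0 - 1)) 0 < dig β 1 (p.1.getD j 0 - 1)) ∧
  (∀ t, t < p.2 - 1 → w.getD (p.1.sum + t) 0 = dig β 1 t) ∧
  w.getD (p.1.sum + (p.2 - 1)) 0 ≤ dig β 1 (p.2 - 1)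


/-!
By induction on `w`, `T_β^n` maps the cylinder `I(w)` onto an interval `[0, T_β^s 1)` with
`T_β^s 1 > 0`, where `ε₁⋯ε_s` is a suffix of `w`: appending a digit `d` either restarts the
count (`d + 1 ≤ β T_β^s 1`, image `[0,1)`) or forces `d = ε_{s+1}` (image `[0, T_β^{s+1} 1)`).
So a non-full word has `s ≥ 1`, and `s < M` because `T_β^M 1 = 0` when `ε(1,β)` has length `M`.
Conversely, a point `y` of `[0,1)` sharing the digits `ε₁⋯ε_s` of `1` satisfies
`T_β^s y - T_β^s 1 = β^s (y - 1) < 0`, so the image misses `T_β^s 1 ∈ [0,1)`.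
-/

open Set

section BetaTransformation

variable {β : ℝ}

lemma Tb_mem_Ico (x : ℝ) : Tb β x ∈ Ico (0 : ℝ) 1 :=
  ⟨Int.fract_nonneg _, Int.fract_lt_one _⟩

lemma iterate_Tb_mem_Ico {x : ℝ} (hx : x ∈ Ico (0 : ℝ) 1) : ∀ k, (Tb β)^[k] x ∈ Ico (0 : ℝ) 1
  | 0 => hx
  | k + 1 => by rw [Function.iterate_succ_apply']; exact Tb_mem_Ico _

lemma iterate_Tb_nonneg {x : ℝ} (hx : 0 ≤ x) : ∀ k, 0 ≤ (Tb β)^[k] x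
  | 0 => hx
  | k + 1 => by rw [Function.iterate_succ_apply']; exact (Tb_mem_Ico _).1

lemma iterate_Tb_lt_one {x : ℝ} {k : ℕ} (hk : k ≠ 0) : (Tb β)^[k] x < 1 := by
  obtain ⟨k, rfl⟩ := Nat.exists_eq_succ_of_ne_zero hk
  rw [Function.iterate_succ_apply']
  exact (Tb_mem_Ico _).2

lemma iterate_Tb_one_le_one : ∀ k, (Tb β)^[k] 1 ≤ 1
  | 0 => le_rfl
  | _ + 1 => (iterate_Tb_lt_one (Nat.succ_ne_zero _)).le

lemma dig_iterate_Tb (x : ℝ) (k i : ℕ) : dig β ((Tb β)^[k] x) i = dig β x (k + i) := by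
  simp only [dig, ← Function.iterate_add_apply, add_comm i k]

lemma natCast_dig (hβ : 0 ≤ β) {x : ℝ} (hx : 0 ≤ x) (i : ℕ) :
    (dig β x i : ℤ) = ⌊β * (Tb β)^[i] x⌋ :=
  Int.toNat_of_nonneg (Int.floor_nonneg.2 (mul_nonneg hβ (iterate_Tb_nonneg hx i)))

lemma iterate_succ_Tb (hβ : 0 ≤ β) {x : ℝ} (hx : 0 ≤ x) (i : ℕ) :
    (Tb β)^[i + 1] x = β * (Tb β)^[i] x - dig β x i := by
  rw [Function.iterate_succ_apply', Tb, ← natCast_dig hβ hx, Int.cast_natCast]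

lemma dig_zero_eq_iff (hβ : 0 ≤ β) {y : ℝ} (hy : 0 ≤ y) {d : ℕ} :
    dig β y 0 = d ↔ (d : ℝ) ≤ β * y ∧ β * y < d + 1 := by
  rw [← Nat.cast_inj (R := ℤ), natCast_dig hβ hy, Function.iterate_zero_apply, Int.floor_eq_iff,
    Int.cast_natCast]

lemma iterate_Tb_sub_iterate_Tb (hβ : 0 ≤ β) {x y : ℝ} (hx : 0 ≤ x) (hy : 0 ≤ y) {s : ℕ}
    (h : ∀ i < s, dig β x i = dig β y i) :
    (Tb β)^[s] x - (Tb β)^[s] y = β ^ s * (x - y) := by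
  induction s with
  | zero => simp
  | succ s ih =>
    rw [iterate_succ_Tb hβ hx, iterate_succ_Tb hβ hy, h s (Nat.lt_succ_self s), pow_succ,
      mul_comm (β ^ s) β, mul_assoc, ← ih fun i hi => h i (by omega)]
    ring

lemma eq_zero_of_forall_dig_eq_zero (hβ : 1 < β) {x : ℝ} (hx : x ∈ Ico (0 : ℝ) 1)
    (h : ∀ i, dig β x i = 0) : x = 0 := by
  have hpow : ∀ i, (Tb β)^[i] x = β ^ i * x := by
    intro i
    induction i with
    | zero => simp
    | succ i ih => rw [iterate_succ_Tb (by linarith) hx.1, h, ih, pow_succ]; push_cast; ring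
  by_contra hne
  have hpos : 0 < x := lt_of_le_of_ne hx.1 (Ne.symm hne)
  obtain ⟨i, hi⟩ := pow_unbounded_of_one_lt x⁻¹ hβ
  have hlt := (iterate_Tb_mem_Ico (β := β) hx i).2
  rw [hpow] at hlt
  have := (inv_lt_iff_one_lt_mul₀ hpos).1 hi
  linarith

lemma iterate_Tb_one_eq_zero_of_finiteLen (hβ : 1 < β) {M s : ℕ} (hM : FiniteLen β M)
    (hs : M ≤ s) : (Tb β)^[s] 1 = 0 :=
  eq_zero_of_forall_dig_eq_zero hβ
    ⟨iterate_Tb_nonneg zero_le_one s, iterate_Tb_lt_one (by have := hM.1; omega)⟩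
    fun i => by rw [dig_iterate_Tb]; exact hM.2.2 _ (by omega)

lemma mem_cyl_singleton {d : ℕ} {y : ℝ} : y ∈ cyl β [d] ↔ y ∈ Ico (0 : ℝ) 1 ∧ dig β y 0 = d := by
  simp [cyl, eq_comm]

lemma cyl_append (u v : List ℕ) :
    cyl β (u ++ v) = cyl β u ∩ (Tb β)^[u.length] ⁻¹' cyl β v := by
  ext x
  simp only [cyl, mem_inter_iff, mem_preimage, mem_ofPred_eq, List.length_append, dig_iterate_Tb]
  constructor
  · rintro ⟨hx, h⟩
    refine ⟨⟨hx, fun i hi => ?_⟩, iterate_Tb_mem_Ico hx _, fun i hi => ?_⟩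
    · simpa [List.getElem_append_left hi] using h i (by omega)
    · simpa using h (u.length + i) (by omega)
  · rintro ⟨⟨hx, hu⟩, -, hv⟩
    refine ⟨hx, fun i hi => ?_⟩
    rw [List.getElem_append]
    split_ifs with hiu
    · exact hu i hiu
    · simpa [Nat.add_sub_cancel' (not_lt.1 hiu)] using hv (i - u.length) (by omega)

lemma image_cyl_append (u v : List ℕ) :
    (Tb β)^[(u ++ v).length] '' cyl β (u ++ v) =
      (Tb β)^[v.length] '' ((Tb β)^[u.length] '' cyl β u ∩ cyl β v) := by
  rw [cyl_append, List.length_append, add_comm, Function.iterate_add, image_comp,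
    image_inter_preimage]

lemma image_Tb_Ico_inter_cyl_singleton (hβ : 0 < β) {t : ℝ} (ht : t ≤ 1) (d : ℕ) :
    Tb β '' (Ico 0 t ∩ cyl β [d]) = Ico 0 (min (β * t - d) 1) := by
  ext z
  simp only [mem_image, mem_inter_iff, mem_cyl_singleton, mem_Ico, lt_min_iff]
  constructor
  · rintro ⟨y, ⟨⟨hy0, hyt⟩, -, hyd⟩, rfl⟩
    obtain ⟨hdy, hyd1⟩ := (dig_zero_eq_iff hβ.le hy0).1 hyd
    have hTb : Tb β y = β * y - d := by simpa [hyd] using iterate_succ_Tb hβ.le hy0 0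
    have := mul_lt_mul_of_pos_left hyt hβ
    rw [hTb]
    exact ⟨by linarith, by linarith, by linarith⟩
  · rintro ⟨hz0, hzt, hz1⟩
    have hβy : β * ((z + d) / β) = z + d := mul_div_cancel₀ _ hβ.ne'
    have hy0 : 0 ≤ (z + d) / β := by positivity
    have hyt : (z + d) / β < t := by rw [div_lt_iff₀ hβ]; linarith
    have hyd : dig β ((z + d) / β) 0 = d :=
      (dig_zero_eq_iff hβ.le hy0).2 ⟨by rw [hβy]; linarith, by rw [hβy]; linarith⟩
    refine ⟨(z + d) / β, ⟨⟨hy0, hyt⟩, ⟨hy0, hyt.trans_le ht⟩, hyd⟩, ?_⟩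
    simpa [hyd, hβy] using iterate_succ_Tb hβ.le hy0 0

theorem exists_image_cyl_eq_Ico (hβ : 0 < β) {w : List ℕ} (hw : (cyl β w).Nonempty) :
    ∃ s u, w = u ++ List.ofFn (fun i : Fin s => dig β 1 i) ∧ 0 < (Tb β)^[s] 1 ∧
      (Tb β)^[w.length] '' cyl β w = Ico 0 ((Tb β)^[s] 1) := by
  induction w using List.reverseRecOn with
  | nil => exact ⟨0, [], rfl, one_pos, by simp [cyl]; rfl⟩
  | append_singleton w d ih =>
    obtain ⟨s, u, hwu, ht, himage⟩ :=
      ih (hw.mono (by rw [cyl_append]; exact inter_subset_left))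
    set t := (Tb β)^[s] 1
    have hstep := image_cyl_append (β := β) w [d]
    rw [himage, List.length_singleton, Function.iterate_one] at hstep
    have hd : (d : ℝ) < β * t := by
      obtain ⟨y, ⟨-, hyt⟩, hy⟩ := image_nonempty.1 (hstep ▸ hw.image _)
      have := mul_lt_mul_of_pos_left hyt hβ
      linarith [((dig_zero_eq_iff hβ.le hy.1.1).1 ((mem_cyl_singleton.1 hy).2)).1]
    rw [hstep, image_Tb_Ico_inter_cyl_singleton hβ (iterate_Tb_one_le_one s) d]
    rcases le_or_gt ((d : ℝ) + 1) (β * t) with hrestart | hcontinue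
    · exact ⟨0, w ++ [d], by simp, one_pos, by rw [min_eq_right (by linarith)]; rfl⟩
    · have hdig : dig β 1 s = d := by
        rw [← add_zero s, ← dig_iterate_Tb, dig_zero_eq_iff hβ.le (iterate_Tb_nonneg zero_le_one s)]
        exact ⟨by linarith, hcontinue⟩
      have hnext : (Tb β)^[s + 1] 1 = β * t - d := by
        rw [iterate_succ_Tb hβ.le zero_le_one, hdig]
      refine ⟨s + 1, u, ?_, by rw [hnext]; linarith, by rw [hnext, min_eq_left (by linarith)]⟩
      rw [hwu, List.ofFn_succ_last, List.append_assoc, ← hdig]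
      rfl

lemma iterate_Tb_lt_iterate_Tb_one_of_mem_cyl (hβ : 0 < β) {s : ℕ} {y : ℝ}
    (hy : y ∈ cyl β (List.ofFn fun i : Fin s => dig β 1 i)) :
    (Tb β)^[s] y < (Tb β)^[s] 1 := by
  obtain ⟨⟨hy0, hy1⟩, hdig⟩ := hy
  have hsub := iterate_Tb_sub_iterate_Tb hβ.le hy0 zero_le_one (s := s)
    fun i hi => by rw [← hdig i (by simpa using hi), List.getElem_ofFn]
  have : β ^ s * (y - 1) < 0 := mul_neg_of_pos_of_neg (by positivity) (by linarith)
  linarith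

lemma not_full_append_ofFn_dig_one (hβ : 0 < β) (u : List ℕ) {s : ℕ} (hs : s ≠ 0) :
    ¬ Full β (u ++ List.ofFn (fun i : Fin s => dig β 1 i)) := by
  intro hfull
  have hmem : (Tb β)^[s] 1 ∈ Ico (0 : ℝ) 1 :=
    ⟨iterate_Tb_nonneg zero_le_one s, iterate_Tb_lt_one hs⟩
  rw [← hfull, image_cyl_append, List.length_ofFn] at hmem
  obtain ⟨y, ⟨-, hy⟩, hys⟩ := hmem
  exact (iterate_Tb_lt_iterate_Tb_one_of_mem_cyl hβ hy).ne hys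

end BetaTransformation

/-- w is not full iff it ends with a nonempty prefix of ε(1,β),
of length s ≤ n, and s ≤ M−1 when ε(1,β) is finite with length M. -/
theorem stmt11 (β : ℝ) (hβ : 1 < β) (w : List ℕ) (h : Adm β w) :
    (¬ Full β w) ↔ ∃ s u, 1 ≤ s ∧ s ≤ w.length ∧
      (∀ M, FiniteLen β M → s ≤ M - 1) ∧
      w = u ++ List.ofFn (fun i : Fin s => dig β 1 i) := by
  have hβ0 : 0 < β := zero_lt_one.trans hβ
  constructor
  · intro hnot
    obtain ⟨s, u, rfl, hpos, himage⟩ := exists_image_cyl_eq_Ico hβ0 h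
    have hs : s ≠ 0 := by rintro rfl; exact hnot himage
    refine ⟨s, u, Nat.one_le_iff_ne_zero.2 hs, by simp, fun M hM => ?_, rfl⟩
    by_contra hlt
    exact hpos.ne' (iterate_Tb_one_eq_zero_of_finiteLen hβ hM (by omega))
  · rintro ⟨s, u, hs, -, -, rfl⟩
    exact not_full_append_ofFn_dig_one hβ0 u (Nat.one_le_iff_ne_zero.1 hs)
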